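/- There exist p.f.d. rectangle decomposable ℝ²-persistence modules M and N with d_I(M,N) = 1 and d_B(M,N) = 2. Concretely, take B(M) = {(−3,1)×(−1,3), (−1,3)×(−3,1), (−1,1)×(−1,1)} and B(N) = {(−2,2)×(−2,2)}: then M and N are 1-interleaved, but every matching between B(M) and B(N) leaves an ε-significant interval (for all ε < 4) unmatched, and no ε-matching exists for ε < 2. -/

import Mathlib

open CategoryTheory Classical

noncomputable section

/-- Convexity of a subset of a poset. -/
def IsConvex {P : Type} [Preorder P] (I : Set P) : Prop :=
  ∀ ⦃p q r : P⦄, p ∈ I → q ∈ I → p ≤ r → r ≤ q → r ∈ I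

/-- Zigzag connectivity within a subset. -/
def ZigzagConnected {P : Type} [Preorder P] (I : Set P) : Prop :=
  ∀ p ∈ I, ∀ q ∈ I,
    Relation.ReflTransGen (fun a b => a ∈ I ∧ b ∈ I ∧ (a ≤ b ∨ b ≤ a)) p q

/-- An interval in a poset: nonempty, convex, and zigzag connected. -/
def IsIntervalSet {P : Type} [Preorder P] (I : Set P) : Prop :=
  I.Nonempty ∧ IsConvex I ∧ ZigzagConnected I

open scoped Classical in
/-- The pointwise vector space of the interval module: `k` (as `⊤`) on `I`, `0` off `I`. -/
def objSub (k : Type) [Field k] {P : Type} [Preorder P] (I : Set P) (p : P) : Submodule k k :=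
  if p ∈ I then ⊤ else ⊥

open scoped Classical in
/-- The interval persistence module `𝕀^I` as a functor `P ⥤ ModuleCat k`. -/
def intervalModule (k : Type) [Field k] {P : Type} [Preorder P] (I : Set P)
    (hI : IsConvex I) : P ⥤ ModuleCat.{0} k where
  obj p := ModuleCat.of k (objSub k I p)
  map {p q} h :=
    if hpq : p ∈ I ∧ q ∈ I then
      ModuleCat.ofHom
        { toFun := fun x => ⟨(x : k), by simp [objSub, hpq.2]⟩
          map_add' := by intros; rfl
          map_smul' := by intros; rfl }
    else 0
  map_id := by
    intro p
    try dsimp only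
    by_cases hp : p ∈ I
    · rw [dif_pos ⟨hp, hp⟩]; rfl
    · rw [dif_neg (fun h => hp h.1)]
      haveI : Subsingleton ↥(objSub k I p) := by
        rw [objSub, if_neg hp]; infer_instance
      apply ModuleCat.hom_ext; apply LinearMap.ext; intro x
      exact this.allEq _ _
  map_comp := by
    intro p q r hpq hqr
    try dsimp only
    by_cases hpr : p ∈ I ∧ r ∈ I
    · have hq : q ∈ I := hI hpr.1 hpr.2 (leOfHom hpq) (leOfHom hqr)
      rw [dif_pos hpr, dif_pos ⟨hpr.1, hq⟩, dif_pos ⟨hq, hpr.2⟩]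
      rfl
    · rw [dif_neg hpr]
      by_cases hp : p ∈ I
      · have hr : r ∉ I := fun hr => hpr ⟨hp, hr⟩
        haveI : Subsingleton ↥(objSub k I r) := by
          rw [objSub, if_neg hr]; infer_instance
        apply ModuleCat.hom_ext; apply LinearMap.ext; intro x
        exact this.allEq _ _
      · haveI : Subsingleton ↥(objSub k I p) := by
          rw [objSub, if_neg hp]; infer_instance
        apply ModuleCat.hom_ext; apply LinearMap.ext; intro x
        have hx : x = 0 := this.allEq x 0
        rw [hx]
        simp

open DirectSum

open scoped ENNReal

/-- Direct sum of a family of persistence modules. -/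
def dsumF (k : Type) [Field k] {P : Type} [Preorder P] {ι : Type}
    (F : ι → P ⥤ ModuleCat.{0} k) : P ⥤ ModuleCat.{0} k where
  obj p := ModuleCat.of k (⨁ i, ((F i).obj p : Type))
  map {p q} h := ModuleCat.ofHom
    (DFinsupp.mapRange.linearMap (fun i => ((F i).map h).hom))
  map_id := by
    intro p
    try dsimp only
    simp only [CategoryTheory.Functor.map_id]
    apply ModuleCat.hom_ext; apply LinearMap.ext; intro x
    apply DFinsupp.ext; intro i
    rfl
  map_comp := by
    intro p q r hpq hqr
    try dsimp only
    simp only [CategoryTheory.Functor.map_comp]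
    apply ModuleCat.hom_ext; apply LinearMap.ext; intro x
    apply DFinsupp.ext; intro i
    rfl

/-- Use the preorder category structure on `Fin n → ℝ`. -/
instance RnCat (n : ℕ) : Category (Fin n → ℝ) := Preorder.smallCategory _

/-- Diagonal translation by `ε` as an endofunctor of the poset `Fin n → ℝ`. -/
def transl (n : ℕ) (ε : ℝ) : (Fin n → ℝ) ⥤ (Fin n → ℝ) :=
  Monotone.functor (f := fun p i => p i + ε)
    (fun _ _ hab i => by have := hab i; dsimp only; linarith)

/-- `M` and `N` are `ε`-interleaved `ℝⁿ`-persistence modules. -/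
def Interleaved (k : Type) [Field k] {n : ℕ} (ε : ℝ)
    (M N : (Fin n → ℝ) ⥤ ModuleCat.{0} k) : Prop :=
  ∃ _hε : 0 ≤ ε, ∃ (f : M ⟶ transl n ε ⋙ N) (g : N ⟶ transl n ε ⋙ M),
    (∀ p : Fin n → ℝ, f.app p ≫ g.app (fun i => p i + ε) =
      M.map (homOfLE (show p ≤ fun i => p i + ε + ε from
        fun i => by show p i ≤ p i + ε + ε; linarith))) ∧
    (∀ p : Fin n → ℝ, g.app p ≫ f.app (fun i => p i + ε) =
      N.map (homOfLE (show p ≤ fun i => p i + ε + ε from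
        fun i => by show p i ≤ p i + ε + ε; linarith)))

/-- An interval `I ⊆ ℝⁿ` is `δ`-trivial: it contains no pair `p ≤ p + δ`. -/
def SetTrivial {n : ℕ} (δ : ℝ) (I : Set (Fin n → ℝ)) : Prop :=
  ¬ ∃ p, p ∈ I ∧ (fun i => p i + δ) ∈ I

/-- Barcode data: an indexed family of nonempty convex intervals in `ℝⁿ`. -/
structure Barcode (n : ℕ) where
  ι : Type
  I : ι → Set (Fin n → ℝ)
  nonempty : ∀ i, (I i).Nonempty
  conv : ∀ i, IsConvex (I i)

/-- The interval decomposable module associated to barcode data. -/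
def Barcode.module (k : Type) [Field k] {n : ℕ} (B : Barcode n) :
    (Fin n → ℝ) ⥤ ModuleCat.{0} k :=
  dsumF k fun i => intervalModule k (B.I i) (B.conv i)

/-- `B` is pointwise finite dimensional. -/
def Barcode.pfd (k : Type) [Field k] {n : ℕ} (B : Barcode n) : Prop :=
  ∀ p : Fin n → ℝ, Module.Finite k ((B.module k).obj p)

/-- An `ε`-matching between two barcodes: a partial bijection such that unmatched
intervals are `2ε`-trivial and matched intervals are `ε`-interleaved. -/
def Matched (k : Type) [Field k] {n : ℕ} (ε : ℝ) (B C : Barcode n) : Prop :=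
  0 ≤ ε ∧ ∃ (A : Set B.ι) (A' : Set C.ι) (e : A ≃ A'),
    (∀ i ∉ A, SetTrivial (2 * ε) (B.I i)) ∧
    (∀ j ∉ A', SetTrivial (2 * ε) (C.I j)) ∧
    (∀ i : A, Interleaved k ε
      (intervalModule k (B.I i) (B.conv i))
      (intervalModule k (C.I (e i)) (C.conv (e i))))

/-- The interleaving distance, valued in `ℝ≥0∞`. -/
def dInt (k : Type) [Field k] {n : ℕ} (M N : (Fin n → ℝ) ⥤ ModuleCat.{0} k) : ℝ≥0∞ :=
  ⨅ (ε : ℝ) (_ : Interleaved k ε M N), ENNReal.ofReal ε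

/-- The bottleneck distance between barcodes, valued in `ℝ≥0∞`. -/
def dBot (k : Type) [Field k] {n : ℕ} (B C : Barcode n) : ℝ≥0∞ :=
  ⨅ (ε : ℝ) (_ : Matched k ε B C), ENNReal.ofReal ε

/-- Rectangles: products of real intervals. -/
def rectSet {n : ℕ} (R : Fin n → Set ℝ) : Set (Fin n → ℝ) := {x | ∀ i, x i ∈ R i}

theorem rectSet_convex {n : ℕ} (R : Fin n → Set ℝ) (h : ∀ i, (R i).OrdConnected) :
    IsConvex (rectSet R) := by
  intro p q r hp hq hpr hrq i
  exact (h i).out (hp i) (hq i) ⟨hpr i, hrq i⟩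

/-- A barcode consists of rectangles. -/
def IsRectBarcode {n : ℕ} (B : Barcode n) : Prop :=
  ∀ i, ∃ R : Fin n → Set ℝ,
    (∀ j, (R j).Nonempty ∧ (R j).OrdConnected) ∧ B.I i = rectSet R

/-- The open rectangle `(a,b) × (c,d) ⊆ ℝ²`. -/
def rect2 (a b c d : ℝ) : Set (Fin 2 → ℝ) := rectSet ![Set.Ioo a b, Set.Ioo c d]

theorem rect2_conv (a b c d : ℝ) : IsConvex (rect2 a b c d) := by
  apply rectSet_convex
  intro j
  fin_cases j
  · simpa using Set.ordConnected_Ioo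
  · simpa using Set.ordConnected_Ioo

theorem rect2_nonempty {a b c d : ℝ} (h1 : a < b) (h2 : c < d) :
    (rect2 a b c d).Nonempty := by
  refine ⟨![(a + b) / 2, (c + d) / 2], fun i => ?_⟩
  fin_cases i
  · simp only [rect2, rectSet]
    constructor <;> (simp; linarith)
  · simp only [rect2, rectSet]
    constructor <;> (simp; linarith)

/-- The barcode `{(−3,1)×(−1,3), (−1,3)×(−3,1), (−1,1)×(−1,1)}`. -/
def B15 : Barcode 2 where
  ι := Fin 3
  I := ![rect2 (-3) 1 (-1) 3, rect2 (-1) 3 (-3) 1, rect2 (-1) 1 (-1) 1]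
  nonempty := by
    intro i
    fin_cases i
    · exact rect2_nonempty (by norm_num) (by norm_num)
    · exact rect2_nonempty (by norm_num) (by norm_num)
    · exact rect2_nonempty (by norm_num) (by norm_num)
  conv := by
    intro i
    fin_cases i
    · exact rect2_conv _ _ _ _
    · exact rect2_conv _ _ _ _
    · exact rect2_conv _ _ _ _

/-- The barcode `{(−2,2)×(−2,2)}`. -/
def N15 : Barcode 2 where
  ι := Fin 1
  I := ![rect2 (-2) 2 (-2) 2]
  nonempty := by
    intro i
    fin_cases i
    exact rect2_nonempty (by norm_num) (by norm_num)
  conv := by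
    intro i
    fin_cases i
    exact rect2_conv _ _ _ _

/-!
A `1`-interleaving is assembled bar by bar from scalars: every bar of `M` maps to the square of
`N` with weight `1`, and the square maps back with weights `1, 1, -1`. Wherever `p` and `p + 2`
lie in the square of `N`, the point `p + 1` lies in all three bars of `M`, and the weight `-1` on
the small square cancels the double count of the two long bars.

For `ε < 1` the point `p = (-ε, -ε)` and `p + 2ε` both lie in the two long bars, so the structure
map `M(p → p + 2ε)` has rank two; an `ε`-interleaving factors it through `N(p + ε)`, which has
dimension at most one.

Every bar has a side of length at most `4`, so all bars are `4`-trivial and the empty matching is a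
`2`-matching. For `ε < 2` neither long bar is `2ε`-trivial, so an `ε`-matching would have to match
both of them, while `N` has a single bar.
-/

def toObjSub (k : Type) [Field k] {P : Type} [Preorder P] (I : Set P) (p : P) :
    k →ₗ[k] objSub k I p :=
  LinearMap.codRestrict (objSub k I p) (if p ∈ I then LinearMap.id else 0) fun c => by
    by_cases hp : p ∈ I
    · simp only [objSub, if_pos hp]; exact Submodule.mem_top
    · simp only [objSub, if_neg hp, LinearMap.zero_apply]; exact Submodule.zero_mem _

section IntervalModule

variable {k : Type} [Field k] {P : Type} [Preorder P] {I : Set P}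

lemma coe_toObjSub (I : Set P) (p : P) (c : k) :
    (toObjSub k I p c : k) = if p ∈ I then c else 0 := by
  unfold toObjSub; split_ifs <;> simp

lemma coe_objSub_eq_zero {p : P} (hp : p ∉ I) (x : objSub k I p) : (x : k) = 0 := by
  have := x.2
  simp only [objSub, if_neg hp] at this
  exact this

lemma intervalModule_map_apply (hI : IsConvex I) {p q : P} (h : p ⟶ q) (x : objSub k I p) :
    (((intervalModule k I hI).map h).hom x : objSub k I q) = toObjSub k I q x := by
  apply Subtype.ext
  rw [coe_toObjSub]
  unfold intervalModule
  dsimp only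
  by_cases hp : p ∈ I
  · by_cases hq : q ∈ I
    · rw [dif_pos ⟨hp, hq⟩, if_pos hq]; rfl
    · rw [dif_neg (fun h => hq h.2), if_neg hq]; rfl
  · rw [dif_neg (fun h => hp h.1), coe_objSub_eq_zero hp]; simp

end IntervalModule

/-- Multiplication by a nonzero scalar, `𝕀^I → 𝕀^J` shifted by `ε`, is natural exactly under this
condition; for open boxes it holds as soon as the box `J - ε` lies weakly below `I`. -/
def AdmitsScalarMorphism {n : ℕ} (ε : ℝ) (I J : Set (Fin n → ℝ)) : Prop :=
  ∀ ⦃p q : Fin n → ℝ⦄, p ≤ q → p ∈ I → (fun l => q l + ε) ∈ J →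
    (q ∈ I ↔ (fun l => p l + ε) ∈ J)

namespace Barcode

section Coordinates

variable {k : Type} [Field k] {n : ℕ} {B : Barcode n}

variable (B) in
def coord (p : Fin n → ℝ) (i : B.ι) : (B.module k).obj p →ₗ[k] k :=
  (objSub k (B.I i) p).subtype ∘ₗ DirectSum.component k B.ι (fun i => objSub k (B.I i) p) i

lemma coord_eq_zero {p : Fin n → ℝ} {i : B.ι} (hp : p ∉ B.I i) (z : (B.module k).obj p) :
    B.coord p i z = 0 :=
  coe_objSub_eq_zero hp _

lemma coord_map {p q : Fin n → ℝ} (h : p ⟶ q) (i : B.ι) (z : (B.module k).obj p) :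
    B.coord q i ((B.module k).map h z) = if q ∈ B.I i then B.coord p i z else 0 := by
  change (objSub k (B.I i) q).subtype (((intervalModule k (B.I i) (B.conv i)).map h).hom
    (DirectSum.component k B.ι (fun j => objSub k (B.I j) p) i z)) = _
  rw [intervalModule_map_apply, Submodule.subtype_apply, coe_toObjSub]
  rfl

lemma ext_coord {p : Fin n → ℝ} {z z' : (B.module k).obj p}
    (h : ∀ i, B.coord p i z = B.coord p i z') : z = z' :=
  DFinsupp.ext fun i => Subtype.ext (h i)

variable (B) in
def coordVec (p : Fin n → ℝ) : (B.module k).obj p →ₗ[k] B.ι → k :=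
  LinearMap.pi (B.coord p)

lemma coordVec_injective (p : Fin n → ℝ) : Function.Injective (B.coordVec (k := k) p) :=
  fun _ _ h => ext_coord fun i => congrFun h i

theorem pfd_of_finite [Finite B.ι] : B.pfd k :=
  fun p => Module.Finite.of_injective _ (coordVec_injective p)

lemma finrank_obj_le [Fintype B.ι] (p : Fin n → ℝ) :
    Module.finrank k ((B.module k).obj p) ≤ Fintype.card B.ι :=
  have := B.pfd_of_finite (k := k)
  (LinearMap.finrank_le_finrank_of_injective (coordVec_injective p)).trans
    (Module.finrank_fintype_fun_eq_card k).le

variable (B) in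
def ofCoords [Fintype B.ι] (p : Fin n → ℝ) : (B.ι → k) →ₗ[k] (B.module k).obj p :=
  (DirectSum.linearEquivFunOnFintype k B.ι (fun i => objSub k (B.I i) p)).symm.toLinearMap ∘ₗ
    LinearMap.pi fun i => toObjSub k (B.I i) p ∘ₗ LinearMap.proj i

lemma coord_ofCoords [Fintype B.ι] (p : Fin n → ℝ) (i : B.ι) (c : B.ι → k) :
    B.coord p i (B.ofCoords p c) = if p ∈ B.I i then c i else 0 :=
  coe_toObjSub _ _ _

end Coordinates

section Interleavings

variable {k : Type} [Field k] {n : ℕ} {B C : Barcode n} [Fintype B.ι] [Fintype C.ι] {ε : ℝ}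

def weightedMap (w : Matrix B.ι C.ι k) (p q : Fin n → ℝ) :
    (B.module k).obj p →ₗ[k] (C.module k).obj q :=
  C.ofCoords q ∘ₗ w.vecMulLinear ∘ₗ B.coordVec p

lemma coord_weightedMap (w : Matrix B.ι C.ι k) (p q : Fin n → ℝ) (j : C.ι)
    (z : (B.module k).obj p) :
    C.coord q j (weightedMap w p q z) = if q ∈ C.I j then ∑ i, B.coord p i z * w i j else 0 :=
  coord_ofCoords _ _ _

def weightedHom (w : Matrix B.ι C.ι k)
    (hw : ∀ i j, w i j ≠ 0 → AdmitsScalarMorphism ε (B.I i) (C.I j)) :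
    B.module k ⟶ transl n ε ⋙ C.module k where
  app p := ModuleCat.ofHom (weightedMap w p fun l => p l + ε)
  naturality p q h := by
    ext z
    refine ext_coord fun j => ?_
    change C.coord (fun l => q l + ε) j (weightedMap w q _ ((B.module k).map h z)) =
      C.coord (fun l => q l + ε) j ((C.module k).map
        (homOfLE (show (fun l => p l + ε) ≤ fun l => q l + ε from ((transl n ε).map h).le))
        (weightedMap w p (fun l => p l + ε) z))
    simp only [coord_weightedMap, coord_map]
    by_cases hq : (fun l => q l + ε) ∈ C.I j
    · have hterm (i : B.ι) : (if q ∈ B.I i then B.coord p i z else 0) * w i j =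
          if (fun l => p l + ε) ∈ C.I j then B.coord p i z * w i j else 0 := by
        by_cases hw0 : w i j = 0
        · simp [hw0]
        by_cases hpi : p ∈ B.I i
        · simp only [hw i j hw0 (leOfHom h) hpi hq]
          split_ifs <;> simp
        · simp [coord_eq_zero hpi]
      simp only [if_pos hq, hterm, Finset.sum_ite_irrel, Finset.sum_const_zero]
    · simp only [if_neg hq]

def ComposesToShift (ε : ℝ) (w : Matrix B.ι C.ι k) (v : Matrix C.ι B.ι k) : Prop :=
  ∀ p i i', p ∈ B.I i → (fun l => p l + ε + ε) ∈ B.I i' →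
    ∑ j, (if (fun l => p l + ε) ∈ C.I j then w i j * v j i' else 0) = if i = i' then 1 else 0

lemma weightedMap_comp_weightedMap {w : Matrix B.ι C.ι k} {v : Matrix C.ι B.ι k}
    (hwv : ComposesToShift ε w v) (p : Fin n → ℝ) (hp : p ≤ fun l => p l + ε + ε)
    (z : (B.module k).obj p) :
    weightedMap v (fun l => p l + ε) (fun l => p l + ε + ε) (weightedMap w p (fun l => p l + ε) z)
      = (B.module k).map (homOfLE hp) z := by
  refine ext_coord fun i' => ?_
  simp only [coord_weightedMap, coord_map]
  by_cases hi' : (fun l => p l + ε + ε) ∈ B.I i'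
  · simp only [if_pos hi']
    calc _ = ∑ i, B.coord p i z *
          ∑ j, (if (fun l => p l + ε) ∈ C.I j then w i j * v j i' else 0) := by
          simp only [Finset.mul_sum]
          rw [Finset.sum_comm]
          refine Finset.sum_congr rfl fun j _ => ?_
          split_ifs <;> simp [Finset.sum_mul, mul_assoc]
      _ = ∑ i, B.coord p i z * if i = i' then 1 else 0 := Finset.sum_congr rfl fun i _ => by
          by_cases hi : p ∈ B.I i
          · rw [hwv p i i' hi hi']
          · rw [coord_eq_zero hi, zero_mul, zero_mul]
      _ = B.coord p i' z := by simp
  · simp only [if_neg hi']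

theorem interleaved_of_weights (hε : 0 ≤ ε) (w : Matrix B.ι C.ι k) (v : Matrix C.ι B.ι k)
    (hw : ∀ i j, w i j ≠ 0 → AdmitsScalarMorphism ε (B.I i) (C.I j))
    (hv : ∀ j i, v j i ≠ 0 → AdmitsScalarMorphism ε (C.I j) (B.I i))
    (hwv : ComposesToShift ε w v) (hvw : ComposesToShift ε v w) :
    Interleaved k ε (B.module k) (C.module k) :=
  ⟨hε, weightedHom w hw, weightedHom v hv,
    fun p => ModuleCat.hom_ext (LinearMap.ext (weightedMap_comp_weightedMap hwv p _)),
    fun p => ModuleCat.hom_ext (LinearMap.ext (weightedMap_comp_weightedMap hvw p _))⟩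

/-- On the bars through `p` and `p + 2ε` the structure map is the identity of `k^s`, while an
interleaving factors it through `C(p + ε)`. -/
theorem card_le_of_interleaved (h : Interleaved k ε (B.module k) (C.module k))
    (p : Fin n → ℝ) :
    Fintype.card {i // p ∈ B.I i ∧ (fun l => p l + ε + ε) ∈ B.I i} ≤ Fintype.card C.ι := by
  set s := {i // p ∈ B.I i ∧ (fun l => p l + ε + ε) ∈ B.I i}
  obtain ⟨_, f, g, hfg, _⟩ := h
  let E : (s → k) →ₗ[k] (B.module k).obj p := B.ofCoords p ∘ₗ LinearMap.pi fun i =>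
    if hi : p ∈ B.I i ∧ (fun l => p l + ε + ε) ∈ B.I i then LinearMap.proj ⟨i, hi⟩ else 0
  let R : (B.module k).obj (fun l => p l + ε + ε) →ₗ[k] s → k :=
    LinearMap.pi fun i => B.coord _ i
  let F : (B.module k).obj p →ₗ[k] (C.module k).obj (fun l => p l + ε) := (f.app p).hom
  let G : (C.module k).obj (fun l => p l + ε) →ₗ[k] (B.module k).obj (fun l => p l + ε + ε) :=
    (g.app _).hom
  have hinv : Function.LeftInverse (R ∘ₗ G) (F ∘ₗ E) := by
    intro c
    have hc : G (F (E c)) = (B.module k).map (homOfLE _) (E c) :=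
      LinearMap.congr_fun (congrArg ModuleCat.Hom.hom (hfg p)) (E c)
    funext i
    obtain ⟨hp, hp'⟩ := i.2
    change B.coord _ i (G (F (E c))) = c i
    rw [hc, coord_map, if_pos hp', LinearMap.comp_apply, coord_ofCoords, if_pos hp,
      LinearMap.pi_apply, dif_pos i.2]
    rfl
  have := C.pfd_of_finite (k := k) (fun l => p l + ε)
  calc Fintype.card s = Module.finrank k (s → k) := by simp
    _ ≤ Module.finrank k ((C.module k).obj (fun l => p l + ε)) :=
      LinearMap.finrank_le_finrank_of_injective hinv.injective
    _ ≤ Fintype.card C.ι := finrank_obj_le _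

end Interleavings

end Barcode

section Matchings

variable {k : Type} [Field k] {n : ℕ} {B C : Barcode n} {ε : ℝ}

theorem matched_of_forall_setTrivial (hε : 0 ≤ ε) (hB : ∀ i, SetTrivial (2 * ε) (B.I i))
    (hC : ∀ j, SetTrivial (2 * ε) (C.I j)) : Matched k ε B C :=
  ⟨hε, ∅, ∅, Equiv.equivOfIsEmpty _ _, fun i _ => hB i, fun j _ => hC j, fun i => isEmptyElim i⟩

theorem Matched.exists_injective (h : Matched k ε B C) :
    ∃ f : {i // ¬SetTrivial (2 * ε) (B.I i)} → C.ι, Function.Injective f := by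
  obtain ⟨_, A, A', e, hA, _, _⟩ := h
  have mem (i : {i // ¬SetTrivial (2 * ε) (B.I i)}) : i.1 ∈ A := by
    by_contra hi
    exact i.2 (hA i hi)
  refine ⟨fun i => e ⟨i, mem i⟩, fun i i' h => ?_⟩
  exact Subtype.ext (Subtype.mk.inj (e.injective (Subtype.ext h)))

end Matchings

section Rectangles

variable {a b c d : ℝ}

lemma mem_rect2 {x : Fin 2 → ℝ} :
    x ∈ rect2 a b c d ↔ (a < x 0 ∧ x 0 < b) ∧ (c < x 1 ∧ x 1 < d) := by
  simp [rect2, rectSet, Fin.forall_fin_two]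

lemma rect2_isRect (hab : a < b) (hcd : c < d) :
    ∃ R : Fin 2 → Set ℝ, (∀ j, (R j).Nonempty ∧ (R j).OrdConnected) ∧ rect2 a b c d = rectSet R :=
  ⟨_, Fin.forall_fin_two.2 ⟨⟨Set.nonempty_Ioo.2 hab, Set.ordConnected_Ioo⟩,
    ⟨Set.nonempty_Ioo.2 hcd, Set.ordConnected_Ioo⟩⟩, rfl⟩

lemma rect2_mono {a' b' c' d' : ℝ} (ha : a' ≤ a) (hb : b ≤ b') (hc : c' ≤ c) (hd : d ≤ d') :
    rect2 a b c d ⊆ rect2 a' b' c' d' := by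
  intro x hx
  rw [mem_rect2] at hx ⊢
  exact ⟨⟨by linarith, by linarith⟩, by linarith, by linarith⟩

lemma setTrivial_rect2_iff {δ : ℝ} (hδ : 0 ≤ δ) :
    SetTrivial δ (rect2 a b c d) ↔ min (b - a) (d - c) ≤ δ := by
  constructor
  · intro h
    by_contra! hlt
    rw [lt_min_iff] at hlt
    refine h ⟨![(a + b - δ) / 2, (c + d - δ) / 2], ?_, ?_⟩ <;>
      simp only [mem_rect2, Matrix.cons_val_zero, Matrix.cons_val_one] <;>
      refine ⟨⟨?_, ?_⟩, ?_, ?_⟩ <;> linarith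
  · rintro h ⟨p, hp, hpδ⟩
    rw [mem_rect2] at hp hpδ
    rcases min_le_iff.1 h with h | h <;> linarith [hp.1.1, hp.2.1, hpδ.1.2, hpδ.2.2]

lemma admitsScalarMorphism_rect2 {ε a' b' c' d' : ℝ} (ha : a' ≤ a + ε) (hb : b' ≤ b + ε)
    (hc : c' ≤ c + ε) (hd : d' ≤ d + ε) :
    AdmitsScalarMorphism ε (rect2 a b c d) (rect2 a' b' c' d') := by
  intro p q hpq hp hq
  have h0 := hpq 0
  have h1 := hpq 1
  simp only [mem_rect2] at hp hq ⊢
  exact iff_of_true ⟨⟨by linarith, by linarith⟩, by linarith, by linarith⟩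
    ⟨⟨by linarith, by linarith⟩, by linarith, by linarith⟩

end Rectangles

lemma iInf_ofReal_eq_of_isLeast {P : ℝ → Prop} {a : ℝ} (h : IsLeast {ε | P ε} a) :
    ⨅ (ε : ℝ) (_ : P ε), ENNReal.ofReal ε = ENNReal.ofReal a :=
  le_antisymm (iInf₂_le a h.1) (le_iInf₂ fun _ hε => ENNReal.ofReal_le_ofReal (h.2 hε))

instance : Fintype B15.ι := inferInstanceAs (Fintype (Fin 3))
instance : Fintype N15.ι := inferInstanceAs (Fintype (Fin 1))
instance : Unique N15.ι := inferInstanceAs (Unique (Fin 1))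

lemma N15_I (j : N15.ι) : N15.I j = rect2 (-2) 2 (-2) 2 := by
  rw [Subsingleton.elim j default]
  rfl

theorem isRectBarcode_B15 : IsRectBarcode B15 := fun i => by
  fin_cases i <;> exact rect2_isRect (by norm_num) (by norm_num)

theorem isRectBarcode_N15 : IsRectBarcode N15 := fun j => by
  rw [N15_I]
  exact rect2_isRect (by norm_num) (by norm_num)

section Example

variable {k : Type} [Field k]

theorem interleaved_B15_N15 : Interleaved k 1 (B15.module k) (N15.module k) := by
  refine Barcode.interleaved_of_weights zero_le_one (fun _ _ => 1) (fun _ i => ![1, 1, -1] i)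
    (fun i j _ => ?_) (fun j i _ => ?_) ?_ ?_
  · fin_cases i <;> fin_cases j <;> apply admitsScalarMorphism_rect2 <;> norm_num
  · fin_cases i <;> fin_cases j <;> apply admitsScalarMorphism_rect2 <;> norm_num
  · -- `p ∈ B_i` and `p + 2 ∈ B_i'` force `i = i'` to be a long bar, and then `p + 1 ∈ N`.
    intro p i i' hi hi'
    rw [Fintype.sum_unique]
    fin_cases i <;> fin_cases i' <;> simp [B15, N15, mem_rect2] at hi hi' ⊢ <;>
      first | (exfalso; linarith) | (refine ⟨?_, ?_, ?_, ?_⟩ <;> linarith)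
  · intro p j j' hj hj'
    obtain rfl : j = j' := Subsingleton.elim j j'
    have hsq : (fun l => p l + 1) ∈ rect2 (-1) 1 (-1) 1 := by
      rw [N15_I, mem_rect2] at hj hj'
      rw [mem_rect2]
      refine ⟨⟨?_, ?_⟩, ?_, ?_⟩ <;> linarith [hj.1.1, hj.2.1, hj'.1.2, hj'.2.2]
    have hB (i : B15.ι) : (fun l => p l + 1) ∈ B15.I i := by
      fin_cases i <;> exact rect2_mono (by norm_num) (by norm_num) (by norm_num) (by norm_num) hsq
    rw [Finset.sum_ite_of_true fun i _ => hB i, if_pos rfl]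
    change ∑ i : Fin 3, (![1, 1, -1] i : k) * 1 = 1
    simp [Fin.sum_univ_succ]

theorem one_le_of_interleaved {ε : ℝ} (h : Interleaved k ε (B15.module k) (N15.module k)) :
    1 ≤ ε := by
  by_contra! hε
  have hε0 : 0 ≤ ε := h.fst
  have hbars (b : Fin 2) : ![-ε, -ε] ∈ B15.I b.castSucc ∧
      (fun l => ![-ε, -ε] l + ε + ε) ∈ B15.I b.castSucc := by
    fin_cases b <;> refine ⟨mem_rect2.2 ?_, mem_rect2.2 ?_⟩ <;>
      simp only [Matrix.cons_val_zero, Matrix.cons_val_one] <;>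
      refine ⟨⟨?_, ?_⟩, ?_, ?_⟩ <;> linarith
  have := calc 2 = Fintype.card (Fin 2) := rfl
    _ ≤ Fintype.card {i : B15.ι // ![-ε, -ε] ∈ B15.I i ∧
          (fun l => ![-ε, -ε] l + ε + ε) ∈ B15.I i} :=
      Fintype.card_le_of_injective (fun b => ⟨b.castSucc, hbars b⟩)
        fun a b hab => Fin.castSucc_injective 2 (congrArg Subtype.val hab)
    _ ≤ Fintype.card N15.ι := Barcode.card_le_of_interleaved h _
    _ = 1 := rfl
  exact absurd this (by decide)

theorem matched_B15_N15 : Matched k 2 B15 N15 := by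
  refine matched_of_forall_setTrivial zero_le_two (fun i => ?_) (fun j => ?_)
  · fin_cases i <;> exact (setTrivial_rect2_iff (by norm_num)).2 (by norm_num)
  · rw [N15_I]
    exact (setTrivial_rect2_iff (by norm_num)).2 (by norm_num)

theorem two_le_of_matched {ε : ℝ} (h : Matched k ε B15 N15) : 2 ≤ ε := by
  by_contra! hε
  have hδ : 0 ≤ 2 * ε := by linarith [h.1]
  have h0 : ¬SetTrivial (2 * ε) (B15.I (0 : Fin 3)) := fun h0 => by
    have := (setTrivial_rect2_iff hδ).1 h0
    norm_num at this
    linarith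
  have h1 : ¬SetTrivial (2 * ε) (B15.I (1 : Fin 3)) := fun h1 => by
    have := (setTrivial_rect2_iff hδ).1 h1
    norm_num at this
    linarith
  obtain ⟨f, hf⟩ := h.exists_injective
  have := hf (Subsingleton.elim (f ⟨(0 : Fin 3), h0⟩) (f ⟨(1 : Fin 3), h1⟩))
  exact Fin.zero_ne_one (congrArg Subtype.val this)

theorem dInt_B15_N15 : dInt k (B15.module k) (N15.module k) = 1 := by
  have h : IsLeast {ε | Interleaved k ε (B15.module k) (N15.module k)} 1 :=
    ⟨interleaved_B15_N15, fun _ => one_le_of_interleaved⟩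
  rw [dInt, iInf_ofReal_eq_of_isLeast h, ENNReal.ofReal_one]

theorem dBot_B15_N15 : dBot k B15 N15 = 2 := by
  have h : IsLeast {ε | Matched k ε B15 N15} 2 := ⟨matched_B15_N15, fun _ => two_le_of_matched⟩
  rw [dBot, iInf_ofReal_eq_of_isLeast h, ENNReal.ofReal_ofNat]

end Example

/-- **Example 4.1.** The rectangle decomposable `ℝ²`-modules with barcodes
`B(M) = {(−3,1)×(−1,3), (−1,3)×(−3,1), (−1,1)×(−1,1)}` and `B(N) = {(−2,2)×(−2,2)}`
are `1`-interleaved and satisfy `d_I(M,N) = 1` and `d_B(M,N) = 2`; in particular there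
exist p.f.d. rectangle decomposable `ℝ²`-modules with `d_B = 2·d_I`. -/
theorem example_dB_eq_two_dI (k : Type) [Field k] :
    B15.pfd k ∧ N15.pfd k ∧ IsRectBarcode B15 ∧ IsRectBarcode N15 ∧
    Interleaved k 1 (B15.module k) (N15.module k) ∧
    dInt k (B15.module k) (N15.module k) = 1 ∧
    dBot k B15 N15 = 2 :=
  ⟨Barcode.pfd_of_finite, Barcode.pfd_of_finite, isRectBarcode_B15, isRectBarcode_N15,
    interleaved_B15_N15, dInt_B15_N15, dBot_B15_N15⟩
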